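/- arXiv:2111.02501 — 7 statements merged into one kernel-verified Lean document; each statement's English description precedes it below -/
import Mathlib

section
/- Let R be a commutative Krasner hyperring with nonzero identity, let φ : L(R) → L(R) ∪ {∅} be a function, and let T be a proper hyperideal of R that is φ-prime. If T is not a prime hyperideal, then T² ⊆ φ(T); equivalently, if T² ⊄ φ(T), then T is a prime hyperideal. -/
universe u

/-- A commutative Krasner hyperring with nonzero identity. -/
class KrasnerHyperring (R : Type u) where
  hadd : R → R → Set R
  mul : R → R → R
  zero : R
  one : R
  neg : R → R
  hadd_nonempty : ∀ a b : R, (hadd a b).Nonempty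
  hadd_comm : ∀ a b : R, hadd a b = hadd b a
  hadd_assoc : ∀ a b c : R, (⋃ x ∈ hadd a b, hadd x c) = ⋃ y ∈ hadd b c, hadd a y
  hadd_zero : ∀ a : R, hadd a zero = {a}
  zero_mem_hadd_neg : ∀ a : R, zero ∈ hadd a (neg a)
  neg_unique : ∀ a b : R, zero ∈ hadd a b → b = neg a
  reversible : ∀ a b c : R, c ∈ hadd a b → b ∈ hadd (neg a) c
  mul_assoc : ∀ a b c : R, mul (mul a b) c = mul a (mul b c)
  mul_comm : ∀ a b : R, mul a b = mul b a
  mul_one : ∀ a : R, mul a one = a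
  mul_zero : ∀ a : R, mul a zero = zero
  one_ne_zero : one ≠ zero
  distrib : ∀ a b c : R, (fun x => mul a x) '' hadd b c = hadd (mul a b) (mul a c)

namespace KrasnerHyperring

variable {R : Type u} [KrasnerHyperring R]

/-- A hyperideal of a Krasner hyperring. -/
structure Hyperideal (R : Type u) [KrasnerHyperring R] where
  carrier : Set R
  nonempty' : carrier.Nonempty
  hadd_subset' : ∀ a ∈ carrier, ∀ b ∈ carrier, hadd a b ⊆ carrier
  neg_mem' : ∀ a ∈ carrier, neg a ∈ carrier
  mul_mem' : ∀ r : R, ∀ a ∈ carrier, mul r a ∈ carrier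

instance : SetLike (Hyperideal R) R where
  coe := Hyperideal.carrier
  coe_injective := by rintro ⟨⟩ ⟨⟩ h; congr

/-- A hyperideal is proper if it is not the whole hyperring. -/
def Hyperideal.IsProper (N : Hyperideal R) : Prop := (N : Set R) ≠ Set.univ

/-- `A ⊕ B` for subsets. -/
def haddSet (A B : Set R) : Set R := ⋃ a ∈ A, ⋃ b ∈ B, hadd a b

/-- `A ∘ B` : set of all products. -/
def mulSet (A B : Set R) : Set R := {x : R | ∃ a ∈ A, ∃ b ∈ B, x = mul a b}

/-- The hyperideal generated by a set (as a set). -/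
def genIdeal (S : Set R) : Set R := ⋂₀ {C : Set R | (∃ I : Hyperideal R, C = ↑I) ∧ S ⊆ C}

/-- Products of `n` elements of `S`. -/
def setPow (S : Set R) : ℕ → Set R
  | 0 => Set.univ
  | 1 => S
  | (n+2) => mulSet S (setPow S (n+1))

/-- `N^n` : the hyperideal generated by products of `n` elements of `N`. -/
def idealPow (N : Hyperideal R) (n : ℕ) : Set R := genIdeal (setPow (↑N) n)

/-- Powers of an element. -/
def hpow (a : R) : ℕ → R
  | 0 => one
  | (n+1) => mul a (hpow a n)

/-- The radical of a set. -/
def radical (A : Set R) : Set R := {a : R | ∃ n : ℕ, 0 < n ∧ hpow a n ∈ A}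

/-- `(A : a)`. -/
def colon (A : Set R) (a : R) : Set R := {r : R | mul a r ∈ A}

/-- `(A : M)` for a set `M`. -/
def colonSet (A B : Set R) : Set R := {r : R | ∀ b ∈ B, mul r b ∈ A}

/-- Prime hyperideal. -/
def IsPrime (N : Hyperideal R) : Prop :=
  N.IsProper ∧ ∀ a b : R, mul a b ∈ N → a ∈ N ∨ b ∈ N

/-- Weakly prime hyperideal. -/
def IsWeaklyPrime (N : Hyperideal R) : Prop :=
  N.IsProper ∧ ∀ a b : R, mul a b ∈ N → mul a b ≠ zero → a ∈ N ∨ b ∈ N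

/-- `φ`-prime hyperideal. -/
def IsPhiPrime (φ : Hyperideal R → Set R) (N : Hyperideal R) : Prop :=
  N.IsProper ∧ ∀ a b : R, mul a b ∈ N → mul a b ∉ φ N → a ∈ N ∨ b ∈ N

/-- Primary hyperideal. -/
def IsPrimary (N : Hyperideal R) : Prop :=
  N.IsProper ∧ ∀ a b : R, mul a b ∈ N → a ∈ N ∨ ∃ k : ℕ, 0 < k ∧ hpow b k ∈ N

/-- `φ`-primary hyperideal. -/
def IsPhiPrimary (φ : Hyperideal R → Set R) (N : Hyperideal R) : Prop :=
  N.IsProper ∧ ∀ a b : R, mul a b ∈ N → mul a b ∉ φ N →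
    a ∈ N ∨ ∃ k : ℕ, 0 < k ∧ hpow b k ∈ N

/-- `δ`-primary hyperideal. -/
def IsDeltaPrimary (δ : Hyperideal R → Hyperideal R) (N : Hyperideal R) : Prop :=
  N.IsProper ∧ ∀ a b : R, mul a b ∈ N → a ∈ N ∨ b ∈ δ N

/-- `φ`-`δ`-primary hyperideal. -/
def IsPhiDeltaPrimary (φ : Hyperideal R → Set R) (δ : Hyperideal R → Hyperideal R)
    (N : Hyperideal R) : Prop :=
  N.IsProper ∧ ∀ a b : R, mul a b ∈ N → mul a b ∉ φ N → a ∈ N ∨ b ∈ δ N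

/-- `φ : L(R) → L(R) ∪ {∅}` : every value is a hyperideal or the empty set. -/
def MapsToIdealOrEmpty (φ : Hyperideal R → Set R) : Prop :=
  ∀ I : Hyperideal R, φ I = ∅ ∨ ∃ J : Hyperideal R, φ I = ↑J

/-- A reduction function. -/
def IsReduction (φ : Hyperideal R → Set R) : Prop :=
  MapsToIdealOrEmpty φ ∧ (∀ I : Hyperideal R, φ I ⊆ ↑I) ∧
    ∀ I J : Hyperideal R, (I : Set R) ⊆ ↑J → φ I ⊆ φ J

/-- An expansion function. -/
def IsExpansion (δ : Hyperideal R → Hyperideal R) : Prop :=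
  (∀ I : Hyperideal R, (I : Set R) ⊆ ↑(δ I)) ∧
    ∀ I J : Hyperideal R, (I : Set R) ⊆ ↑J → (δ I : Set R) ⊆ ↑(δ J)

/-- `φ_w(N) = ⋂_{n ≥ 1} N^n`. -/
def phiW (N : Hyperideal R) : Set R := ⋂ (n : ℕ) (_ : 1 ≤ n), idealPow N n

lemma zero_mem (N : Hyperideal R) : zero ∈ N := by
  obtain ⟨a, ha⟩ := N.nonempty'
  exact N.hadd_subset' a ha (neg a) (N.neg_mem' a ha) (zero_mem_hadd_neg a)

lemma proper_of_subset_proper {M T : Hyperideal R} (h : (M : Set R) ⊆ ↑T)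
    (hT : T.IsProper) : M.IsProper :=
  fun hu => hT (Set.univ_subset_iff.mp (hu ▸ h))

/-!
If `T` is not prime, pick `a, b ∉ T` with `a ∘ b ∈ T`; `φ`-primality forces `a ∘ b ∈ φ(T)`, so
`φ(T)` is a hyperideal `J`. For `p, q ∈ T` and any `u ∈ a ⊕ p`, `v ∈ b ⊕ q`, each of the pairs
`(a, b)`, `(u, b)`, `(a, v)`, `(u, v)` again consists of two elements outside `T` with product in
`T`, so all four products lie in `J`. Since `p ∈ (-a) ⊕ u` and `q ∈ (-b) ⊕ v`, distributivity
turns these four memberships into `p ∘ q ∈ J`.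
-/

lemma mul_neg (a b : R) : mul a (neg b) = neg (mul a b) := by
  apply neg_unique
  simpa only [← distrib, mul_zero] using Set.mem_image_of_mem (mul a) (zero_mem_hadd_neg b)

namespace Hyperideal

variable {N : Hyperideal R}

lemma mem_of_mem_hadd {x y c : R} (hx : x ∈ N) (hc : c ∈ N) (h : c ∈ hadd x y) : y ∈ N :=
  N.hadd_subset' _ (N.neg_mem' x hx) c hc (reversible x y c h)

lemma mul_mem_of_mem_hadd {r x y z : R} (h : x ∈ hadd y z) (hy : mul r y ∈ N)
    (hz : mul r z ∈ N) : mul r x ∈ N :=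
  N.hadd_subset' _ hy _ hz (distrib r y z ▸ Set.mem_image_of_mem (mul r) h)

lemma mul_neg_mem {r x : R} (h : mul r x ∈ N) : mul r (neg x) ∈ N :=
  mul_neg r x ▸ N.neg_mem' _ h

end Hyperideal

def IsNonPrimePair (N : Hyperideal R) (x y : R) : Prop :=
  mul x y ∈ N ∧ x ∉ N ∧ y ∉ N

namespace IsNonPrimePair

variable {N : Hyperideal R} {x y : R}

lemma symm (h : IsNonPrimePair N x y) : IsNonPrimePair N y x :=
  ⟨mul_comm x y ▸ h.1, h.2.2, h.2.1⟩

lemma hadd_left {p u : R} (h : IsNonPrimePair N x y) (hp : p ∈ N) (hu : u ∈ hadd x p) :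
    IsNonPrimePair N u y := by
  refine ⟨?_, fun hu' => h.2.1 (N.mem_of_mem_hadd hp hu' (hadd_comm x p ▸ hu)), h.2.2⟩
  rw [mul_comm]
  exact N.mul_mem_of_mem_hadd hu (mul_comm x y ▸ h.1) (N.mul_mem' y p hp)

lemma hadd_right {q v : R} (h : IsNonPrimePair N x y) (hq : q ∈ N) (hv : v ∈ hadd y q) :
    IsNonPrimePair N x v :=
  (h.symm.hadd_left hq hv).symm

end IsNonPrimePair

lemma exists_isNonPrimePair {N : Hyperideal R} (hN : N.IsProper) (h : ¬ IsPrime N) :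
    ∃ x y, IsNonPrimePair N x y := by
  by_contra! hprime
  refine h ⟨hN, fun x y hxy => ?_⟩
  by_contra! hx
  exact hprime x y ⟨hxy, hx⟩

lemma IsPhiPrime.mul_mem_of_isNonPrimePair {φ : Hyperideal R → Set R} {N : Hyperideal R}
    {x y : R} (hN : IsPhiPrime φ N) (h : IsNonPrimePair N x y) : mul x y ∈ φ N := by
  by_contra hφ
  rcases hN.2 x y h.1 hφ with hx | hy
  exacts [h.2.1 hx, h.2.2 hy]

lemma mul_mem_of_forall_isNonPrimePair {N J : Hyperideal R}
    (hJ : ∀ x y, IsNonPrimePair N x y → mul x y ∈ J) {a b p q : R}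
    (hab : IsNonPrimePair N a b) (hp : p ∈ N) (hq : q ∈ N) : mul p q ∈ J := by
  obtain ⟨u, hu⟩ := hadd_nonempty a p
  obtain ⟨v, hv⟩ := hadd_nonempty b q
  have hp' : p ∈ hadd (neg a) u := reversible a p u hu
  have hq' : q ∈ hadd (neg b) v := reversible b q v hv
  have hub := hJ u b (hab.hadd_left hp hu)
  have hav := hJ a v (hab.hadd_right hq hv)
  have huv := hJ u v ((hab.hadd_left hp hu).hadd_right hq hv)
  have hpb : mul b p ∈ J :=
    J.mul_mem_of_mem_hadd hp' (J.mul_neg_mem (mul_comm a b ▸ hJ a b hab)) (mul_comm u b ▸ hub)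
  have hpv : mul v p ∈ J :=
    J.mul_mem_of_mem_hadd hp' (J.mul_neg_mem (mul_comm a v ▸ hav)) (mul_comm u v ▸ huv)
  exact J.mul_mem_of_mem_hadd hq' (J.mul_neg_mem (mul_comm b p ▸ hpb)) (mul_comm v p ▸ hpv)

lemma idealPow_two_subset {N J : Hyperideal R} (h : ∀ p ∈ N, ∀ q ∈ N, mul p q ∈ J) :
    idealPow N 2 ⊆ J := by
  intro x hx
  refine hx J ⟨⟨J, rfl⟩, ?_⟩
  rintro _ ⟨p, hp, q, hq, rfl⟩
  exact h p hp q hq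

/-- If the proper hyperideal `T` is `φ`-prime but not prime,
then `T² ⊆ φ(T)`. -/
theorem phiPrime_not_prime_sq_subset {R : Type u} [KrasnerHyperring R]
    (φ : Hyperideal R → Set R) (hφ : MapsToIdealOrEmpty φ)
    (T : Hyperideal R) (hT : IsPhiPrime φ T) (hnp : ¬ IsPrime T) :
    idealPow T 2 ⊆ φ T := by
  obtain ⟨a, b, hab⟩ := exists_isNonPrimePair hT.1 hnp
  obtain ⟨J, hJ⟩ : ∃ J : Hyperideal R, φ T = J := (hφ T).resolve_left fun hempty => by
    simpa [hempty] using hT.mul_mem_of_isNonPrimePair hab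
  have hJ_mem : ∀ x y, IsNonPrimePair T x y → mul x y ∈ J := fun x y hxy => by
    simpa [hJ] using hT.mul_mem_of_isNonPrimePair hxy
  rw [hJ]
  exact idealPow_two_subset fun p hp q hq => mul_mem_of_forall_isNonPrimePair hJ_mem hab hp hq

end KrasnerHyperring
end

section
/- Let R be a commutative Krasner hyperring with nonzero identity, N a proper hyperideal of R, and φ : L(R) → L(R) ∪ {∅} a function with φ(N) ⊆ N. Then the following are equivalent: (i) N is a φ-prime hyperideal of R; (ii) for every a ∈ R − N, (N : a) = N ∪ (φ(N) : a); (iii) for every a ∈ R − N, (N : a) = N or (N : a) = (φ(N) : a); (iv) for all hyperideals K, L of R with K∘L ⊆ N and K∘L ⊄ φ(N), either K ⊆ N or L ⊆ N. -/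
universe u

namespace KrasnerHyperring

variable {R : Type u} [KrasnerHyperring R]

/-!
Parts (ii) and (iii) are rewritings of the definition of a φ-prime hyperideal, except for
(ii) ⇒ (iii), which is the fact that a set closed under addition is never the union of two
sets closed under differences unless one of them contains the other.

For (i) ⇒ (iv), suppose `K ⊄ N` and `L ⊄ N`. Products `u ∘ v` with `u ∈ K ∖ N`, `v ∈ L ∖ N`
lie in `φ(N)`. Each `a ∈ K ∩ N` is a difference of two elements of `K ∖ N` (namely `a' ⊕ a`
and `a'` for any `a' ∈ K ∖ N`), so, `φ(N)` being closed under differences, `K ∘ v ⊆ φ(N)`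
for all `v ∈ L ∖ N`, and by the same argument in `L`, `K ∘ L ⊆ φ(N)`.
The converse applies (iv) to principal hyperideals.
-/

lemma mul_left_comm (a b c : R) : mul a (mul b c) = mul b (mul a c) := by
  rw [← mul_assoc, mul_comm a b, mul_assoc]

lemma mul_mem_hadd_mul (a : R) {b c x : R} (h : x ∈ hadd b c) :
    mul a x ∈ hadd (mul a b) (mul a c) := by
  rw [← distrib]
  exact ⟨x, h, rfl⟩

lemma mem_hadd_neg_of_mem_hadd {a b c : R} (h : c ∈ hadd a b) : a ∈ hadd (neg b) c :=
  reversible b a c (by rwa [hadd_comm])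

lemma mul_mem_mulSet {A B : Set R} {a b : R} (ha : a ∈ A) (hb : b ∈ B) :
    mul a b ∈ mulSet A B :=
  ⟨a, ha, b, hb, rfl⟩

/-- Closure under differences, shared by hyperideals and `∅`. -/
def IsClosedUnderSub (S : Set R) : Prop :=
  ∀ x ∈ S, ∀ y ∈ S, hadd (neg x) y ⊆ S

namespace IsClosedUnderSub

variable {S : Set R}

lemma mem_right_of_mem_hadd (hS : IsClosedUnderSub S) {x y z : R} (hz : z ∈ hadd x y)
    (hx : x ∈ S) (hzS : z ∈ S) : y ∈ S :=
  hS x hx z hzS (reversible x y z hz)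

lemma mem_left_of_mem_hadd (hS : IsClosedUnderSub S) {x y z : R} (hz : z ∈ hadd x y)
    (hy : y ∈ S) (hzS : z ∈ S) : x ∈ S :=
  hS y hy z hzS (mem_hadd_neg_of_mem_hadd hz)

lemma colon (hS : IsClosedUnderSub S) (a : R) : IsClosedUnderSub (colon S a) := by
  intro x hx y hy z hz
  have hmul := mul_mem_hadd_mul a hz
  rw [mul_neg] at hmul
  exact hS _ hx _ hy hmul

lemma subset_or_subset_of_union {B C : Set R} (hB : IsClosedUnderSub B) (hC : IsClosedUnderSub C)
    (hU : ∀ x ∈ B ∪ C, ∀ y ∈ B ∪ C, hadd x y ⊆ B ∪ C) : B ⊆ C ∨ C ⊆ B := by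
  by_contra! h
  obtain ⟨⟨y, hyB, hyC⟩, ⟨x, hxC, hxB⟩⟩ := And.imp Set.not_subset.mp Set.not_subset.mp h
  obtain ⟨z, hz⟩ := hadd_nonempty x y
  rcases hU x (Or.inr hxC) y (Or.inl hyB) hz with hzB | hzC
  · exact hxB (hB.mem_left_of_mem_hadd hz hyB hzB)
  · exact hyC (hC.mem_right_of_mem_hadd hz hxC hzC)

/-- If `K ⊄ N`, every element of `K ∩ N` is a difference of two elements of `K ∖ N`. -/
lemma subset_of_diff_subset (K : Hyperideal R) {N T : Set R} (hN : IsClosedUnderSub N)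
    (hT : IsClosedUnderSub T) (hKN : ¬ (K : Set R) ⊆ N) (h : (K : Set R) \ N ⊆ T) :
    (K : Set R) ⊆ T := by
  intro a haK
  by_cases haN : a ∈ N
  · obtain ⟨a', ha'K, ha'N⟩ := Set.not_subset.mp hKN
    obtain ⟨z, hz⟩ := hadd_nonempty a' a
    have hzK : z ∈ K := K.hadd_subset' a' ha'K a haK hz
    have hzN : z ∉ N := fun hzN => ha'N (hN.mem_left_of_mem_hadd hz haN hzN)
    exact hT.mem_right_of_mem_hadd hz (h ⟨ha'K, ha'N⟩) (h ⟨hzK, hzN⟩)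
  · exact h ⟨haK, haN⟩

end IsClosedUnderSub

lemma Hyperideal.isClosedUnderSub (I : Hyperideal R) : IsClosedUnderSub (I : Set R) :=
  fun x hx y hy => I.hadd_subset' _ (I.neg_mem' x hx) y hy

lemma MapsToIdealOrEmpty.isClosedUnderSub {φ : Hyperideal R → Set R}
    (hφ : MapsToIdealOrEmpty φ) (I : Hyperideal R) : IsClosedUnderSub (φ I) := by
  rcases hφ I with hI | ⟨J, hJ⟩
  · rw [hI]
    exact fun x hx => absurd hx (Set.notMem_empty x)
  · rw [hJ]
    exact J.isClosedUnderSub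

lemma hadd_subset_colon {I : Hyperideal R} {a x y : R} (hx : x ∈ colon (I : Set R) a)
    (hy : y ∈ colon (I : Set R) a) : hadd x y ⊆ colon (I : Set R) a :=
  fun _ hz => I.hadd_subset' _ hx _ hy (mul_mem_hadd_mul a hz)

def principal (a : R) : Hyperideal R where
  carrier := {x | ∃ r : R, x = mul a r}
  nonempty' := ⟨a, one, (mul_one a).symm⟩
  hadd_subset' := by
    rintro _ ⟨r, rfl⟩ _ ⟨s, rfl⟩ x hx
    rw [← distrib] at hx
    obtain ⟨t, _, rfl⟩ := hx
    exact ⟨t, rfl⟩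
  neg_mem' := by
    rintro _ ⟨r, rfl⟩
    exact ⟨neg r, (mul_neg a r).symm⟩
  mul_mem' := by
    rintro s _ ⟨r, rfl⟩
    exact ⟨mul s r, mul_left_comm s a r⟩

lemma self_mem_principal (a : R) : a ∈ principal a :=
  ⟨one, (mul_one a).symm⟩

lemma mulSet_principal_subset {I : Hyperideal R} {a b : R} (hab : mul a b ∈ I) :
    mulSet ((principal a : Hyperideal R) : Set R) (principal b) ⊆ I := by
  rintro _ ⟨_, ⟨r, rfl⟩, _, ⟨s, rfl⟩, rfl⟩
  have hrearrange : mul (mul a r) (mul b s) = mul (mul r s) (mul a b) := by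
    rw [mul_assoc, mul_left_comm r, ← mul_assoc, mul_comm]
  rw [hrearrange]
  exact I.mul_mem' _ _ hab

namespace IsPhiPrime

variable {φ : Hyperideal R → Set R} {N : Hyperideal R}

lemma mul_mem_of_notMem (hP : IsPhiPrime φ N) {a b : R} (hab : mul a b ∈ N)
    (ha : a ∉ N) (hb : b ∉ N) : mul a b ∈ φ N := by
  by_contra h
  exact (hP.2 a b hab h).elim ha hb

lemma colon_eq_union (hP : IsPhiPrime φ N) (hφN : φ N ⊆ (N : Set R)) {a : R}
    (ha : a ∉ (N : Set R)) : colon (N : Set R) a = (N : Set R) ∪ colon (φ N) a := by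
  ext r
  refine ⟨fun hr => ?_, ?_⟩
  · by_cases hrN : r ∈ N
    · exact Or.inl hrN
    · exact Or.inr (hP.mul_mem_of_notMem hr ha hrN)
  · rintro (hr | hr)
    · exact N.mul_mem' a r hr
    · exact hφN hr

lemma mulSet_subset (hP : IsPhiPrime φ N) (hφ : IsClosedUnderSub (φ N)) {K L : Hyperideal R}
    (hKL : mulSet (K : Set R) (L : Set R) ⊆ (N : Set R)) (hK : ¬ (K : Set R) ⊆ N)
    (hL : ¬ (L : Set R) ⊆ N) : mulSet (K : Set R) (L : Set R) ⊆ φ N := by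
  have hN := N.isClosedUnderSub
  have hKv : ∀ v ∈ (L : Set R) \ N, (K : Set R) ⊆ colon (φ N) v := by
    rintro v ⟨hvL, hvN⟩
    refine hN.subset_of_diff_subset K (hφ.colon v) hK ?_
    rintro u ⟨huK, huN⟩
    change mul v u ∈ φ N
    rw [mul_comm]
    exact hP.mul_mem_of_notMem (hKL (mul_mem_mulSet huK hvL)) huN hvN
  rintro _ ⟨u, huK, v, hvL, rfl⟩
  refine hN.subset_of_diff_subset L (hφ.colon u) hL (fun w hw => ?_) hvL
  change mul u w ∈ φ N
  rw [mul_comm]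
  exact hKv w hw huK

end IsPhiPrime

lemma colon_eq_or_eq_of_eq_union {N : Hyperideal R} {S : Set R} (hS : IsClosedUnderSub S)
    {a : R} (h : colon (N : Set R) a = (N : Set R) ∪ colon S a) :
    colon (N : Set R) a = (N : Set R) ∨ colon (N : Set R) a = colon S a := by
  have hU : ∀ x ∈ (N : Set R) ∪ colon S a, ∀ y ∈ (N : Set R) ∪ colon S a,
      hadd x y ⊆ (N : Set R) ∪ colon S a := by
    rw [← h]
    exact fun x hx y hy => hadd_subset_colon hx hy
  rw [h]
  rcases N.isClosedUnderSub.subset_or_subset_of_union (hS.colon a) hU with hsub | hsub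
  · exact Or.inr (Set.union_eq_right.mpr hsub)
  · exact Or.inl (Set.union_eq_left.mpr hsub)

lemma isPhiPrime_of_colon_eq_or_eq {φ : Hyperideal R → Set R} {N : Hyperideal R}
    (hN : N.IsProper) (h : ∀ a : R, a ∉ (N : Set R) →
      colon (N : Set R) a = (N : Set R) ∨ colon (N : Set R) a = colon (φ N) a) :
    IsPhiPrime φ N := by
  refine ⟨hN, fun a b hab hnab => or_iff_not_imp_left.mpr fun ha => ?_⟩
  rcases h a ha with hcolon | hcolon
  · exact (show b ∈ (N : Set R) from hcolon ▸ hab)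
  · exact absurd (show b ∈ colon (φ N) a from hcolon ▸ hab) hnab

lemma isPhiPrime_of_forall_mulSet_subset {φ : Hyperideal R → Set R} {N : Hyperideal R}
    (hN : N.IsProper) (h : ∀ K L : Hyperideal R, mulSet (K : Set R) (L : Set R) ⊆ (N : Set R) →
      ¬ mulSet (K : Set R) (L : Set R) ⊆ φ N →
      (K : Set R) ⊆ (N : Set R) ∨ (L : Set R) ⊆ (N : Set R)) :
    IsPhiPrime φ N := by
  refine ⟨hN, fun a b hab hnab => ?_⟩
  have hnot : ¬ mulSet ((principal a : Hyperideal R) : Set R) (principal b) ⊆ φ N :=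
    fun hsub => hnab (hsub (mul_mem_mulSet (self_mem_principal a) (self_mem_principal b)))
  exact (h _ _ (mulSet_principal_subset hab) hnot).imp
    (fun hsub => hsub (self_mem_principal a)) (fun hsub => hsub (self_mem_principal b))

/-- characterizations of `φ`-prime hyperideals. -/
theorem phiPrime_characterizations {R : Type u} [KrasnerHyperring R]
    (φ : Hyperideal R → Set R) (hφ : MapsToIdealOrEmpty φ)
    (N : Hyperideal R) (hN : N.IsProper) (hφN : φ N ⊆ (N : Set R)) :
    (IsPhiPrime φ N ↔
      ∀ a : R, a ∉ (N : Set R) → colon (N : Set R) a = (N : Set R) ∪ colon (φ N) a) ∧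
    (IsPhiPrime φ N ↔
      ∀ a : R, a ∉ (N : Set R) →
        colon (N : Set R) a = (N : Set R) ∨ colon (N : Set R) a = colon (φ N) a) ∧
    (IsPhiPrime φ N ↔
      ∀ K L : Hyperideal R, mulSet (K : Set R) (L : Set R) ⊆ (N : Set R) →
        ¬ mulSet (K : Set R) (L : Set R) ⊆ φ N →
        (K : Set R) ⊆ (N : Set R) ∨ (L : Set R) ⊆ (N : Set R)) := by
  have hφ' : IsClosedUnderSub (φ N) := hφ.isClosedUnderSub N
  have h12 (hP : IsPhiPrime φ N) (a : R) (ha : a ∉ (N : Set R)) :=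
    hP.colon_eq_union hφN ha
  have h23 (h : ∀ a : R, a ∉ (N : Set R) → colon (N : Set R) a = (N : Set R) ∪ colon (φ N) a)
      (a : R) (ha : a ∉ (N : Set R)) :=
    colon_eq_or_eq_of_eq_union hφ' (h a ha)
  have h31 := isPhiPrime_of_colon_eq_or_eq (φ := φ) hN
  refine ⟨⟨h12, fun h => h31 (h23 h)⟩, ⟨fun hP => h23 (h12 hP), h31⟩, ⟨?_, ?_⟩⟩
  · exact fun hP K L hKL hnot =>
      or_iff_not_and_not.mpr fun ⟨hK, hL⟩ => hnot (hP.mulSet_subset hφ' hKL hK hL)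
  · exact isPhiPrime_of_forall_mulSet_subset hN

end KrasnerHyperring
end

section
/- Let X and Y be commutative Krasner hyperrings with nonzero identity and let N be a weakly prime hyperideal of X. Then M = N × Y is a φ-prime hyperideal of R = X × Y for every function φ : L(R) → L(R) ∪ {∅} with φ_w ≤ φ ≤ φ₁. -/
universe u

namespace KrasnerHyperring

variable {R : Type u} [KrasnerHyperring R]

/-- The product of two Krasner hyperrings, with componentwise operations. -/
instance prodKH (R₁ R₂ : Type u) [KrasnerHyperring R₁] [KrasnerHyperring R₂] :
    KrasnerHyperring (R₁ × R₂) where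
  hadd a b := (hadd a.1 b.1) ×ˢ (hadd a.2 b.2)
  mul a b := (mul a.1 b.1, mul a.2 b.2)
  zero := (zero, zero)
  one := (one, one)
  neg a := (neg a.1, neg a.2)
  hadd_nonempty a b := (hadd_nonempty a.1 b.1).prod (hadd_nonempty a.2 b.2)
  hadd_comm a b := by rw [hadd_comm a.1 b.1, hadd_comm a.2 b.2]
  hadd_assoc a b c := by
    ext z
    constructor
    · intro hz
      simp only [Set.mem_iUnion] at hz
      obtain ⟨x, hx, hz⟩ := hz
      have H1 : z.1 ∈ ⋃ t ∈ hadd a.1 b.1, hadd t c.1 := Set.mem_biUnion hx.1 hz.1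
      have H2 : z.2 ∈ ⋃ t ∈ hadd a.2 b.2, hadd t c.2 := Set.mem_biUnion hx.2 hz.2
      rw [hadd_assoc] at H1 H2
      obtain ⟨y1, hy1, hz1⟩ := Set.mem_iUnion₂.mp H1
      obtain ⟨y2, hy2, hz2⟩ := Set.mem_iUnion₂.mp H2
      simp only [Set.mem_iUnion]
      exact ⟨(y1, y2), ⟨hy1, hy2⟩, hz1, hz2⟩
    · intro hz
      simp only [Set.mem_iUnion] at hz
      obtain ⟨y, hy, hz⟩ := hz
      have H1 : z.1 ∈ ⋃ t ∈ hadd b.1 c.1, hadd a.1 t := Set.mem_biUnion hy.1 hz.1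
      have H2 : z.2 ∈ ⋃ t ∈ hadd b.2 c.2, hadd a.2 t := Set.mem_biUnion hy.2 hz.2
      rw [← hadd_assoc] at H1 H2
      obtain ⟨x1, hx1, hz1⟩ := Set.mem_iUnion₂.mp H1
      obtain ⟨x2, hx2, hz2⟩ := Set.mem_iUnion₂.mp H2
      simp only [Set.mem_iUnion]
      exact ⟨(x1, x2), ⟨hx1, hx2⟩, hz1, hz2⟩
  hadd_zero a := by simp only []; rw [hadd_zero a.1, hadd_zero a.2, Set.singleton_prod_singleton]
  zero_mem_hadd_neg a := ⟨zero_mem_hadd_neg a.1, zero_mem_hadd_neg a.2⟩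
  neg_unique := by
    intro a b h
    have h1 := neg_unique a.1 b.1 h.1
    have h2 := neg_unique a.2 b.2 h.2
    exact Prod.ext h1 h2
  reversible := by
    intro a b c h
    exact ⟨reversible a.1 b.1 c.1 h.1, reversible a.2 b.2 c.2 h.2⟩
  mul_assoc a b c := by simp [mul_assoc]
  mul_comm a b := by simp [mul_comm a.1 b.1, mul_comm a.2 b.2]
  mul_one a := by simp [mul_one]
  mul_zero a := by simp [mul_zero]
  one_ne_zero := by
    intro h
    exact one_ne_zero (congrArg Prod.fst h)
  distrib a b c := by
    ext x
    constructor
    · rintro ⟨y, hy, rfl⟩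
      have h1 : mul a.1 y.1 ∈ (fun t => mul a.1 t) '' hadd b.1 c.1 := ⟨y.1, hy.1, rfl⟩
      have h2 : mul a.2 y.2 ∈ (fun t => mul a.2 t) '' hadd b.2 c.2 := ⟨y.2, hy.2, rfl⟩
      rw [distrib] at h1 h2
      exact ⟨h1, h2⟩
    · rintro ⟨h1, h2⟩
      rw [← distrib] at h1 h2
      obtain ⟨y1, hy1, e1⟩ := h1
      obtain ⟨y2, hy2, e2⟩ := h2
      exact ⟨(y1, y2), ⟨hy1, hy2⟩, Prod.ext e1 e2⟩

/-- The product hyperideal `N₁ × N₂` of `R₁ × R₂`. -/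
def prodIdeal {R₁ R₂ : Type u} [KrasnerHyperring R₁] [KrasnerHyperring R₂]
    (N₁ : Hyperideal R₁) (N₂ : Hyperideal R₂) : Hyperideal (R₁ × R₂) where
  carrier := (N₁ : Set R₁) ×ˢ (N₂ : Set R₂)
  nonempty' := N₁.nonempty'.prod N₂.nonempty'
  hadd_subset' := by
    rintro a ha b hb x hx
    exact ⟨N₁.hadd_subset' a.1 ha.1 b.1 hb.1 hx.1, N₂.hadd_subset' a.2 ha.2 b.2 hb.2 hx.2⟩
  neg_mem' := by
    rintro a ha
    exact ⟨N₁.neg_mem' a.1 ha.1, N₂.neg_mem' a.2 ha.2⟩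
  mul_mem' := by
    rintro r a ha
    exact ⟨N₁.mul_mem' r.1 a.1 ha.1, N₂.mul_mem' r.2 a.2 ha.2⟩

/-- The whole hyperring as a hyperideal. -/
def topIdeal (R : Type u) [KrasnerHyperring R] : Hyperideal R where
  carrier := Set.univ
  nonempty' := ⟨zero, trivial⟩
  hadd_subset' := fun _ _ _ _ => Set.subset_univ _
  neg_mem' := fun _ _ => trivial
  mul_mem' := fun _ _ _ => trivial

/- In `X × Y` every element `(0, y)` of `N × Y` is fixed by multiplication with `(0, 1) ∈ N × Y`,
so it is a product of arbitrarily many elements of `N × Y` and lies in `φ_w (N × Y) ⊆ φ (N × Y)`.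
Hence a product `a ∘ b ∈ N × Y` outside `φ (N × Y)` has nonzero first coordinate, and weak
primeness of `N` applies to it. -/

lemma prod_mul_def {R₁ R₂ : Type u} [KrasnerHyperring R₁] [KrasnerHyperring R₂]
    (a b : R₁ × R₂) : mul a b = (mul a.1 b.1, mul a.2 b.2) := rfl

lemma subset_genIdeal (S : Set R) : S ⊆ genIdeal S :=
  fun _ hx _ hC => hC.2 hx

lemma mem_setPow_of_mul_eq {S : Set R} {e c : R} (he : e ∈ S) (hc : c ∈ S)
    (hec : mul e c = c) : ∀ n, 1 ≤ n → c ∈ setPow S n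
  | 1, _ => hc
  | n + 2, _ => ⟨e, he, c, mem_setPow_of_mul_eq he hc hec (n + 1) (Nat.le_add_left 1 n), hec.symm⟩

lemma mem_phiW_of_mul_eq {J : Hyperideal R} {e c : R} (he : e ∈ J) (hc : c ∈ J)
    (hec : mul e c = c) : c ∈ phiW J :=
  Set.mem_iInter₂.mpr fun n hn => subset_genIdeal _ (mem_setPow_of_mul_eq he hc hec n hn)

lemma zero_prod_mem_phiW_prod_top {X Y : Type u} [KrasnerHyperring X] [KrasnerHyperring Y]
    (N : Hyperideal X) (y : Y) : ((zero : X), y) ∈ phiW (prodIdeal N (topIdeal Y)) := by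
  refine mem_phiW_of_mul_eq (e := ((zero : X), (one : Y))) ⟨zero_mem N, trivial⟩
    ⟨zero_mem N, trivial⟩ ?_
  rw [prod_mul_def, mul_zero, mul_comm, mul_one]

lemma Hyperideal.IsProper.prodIdeal_left {R₁ R₂ : Type u}
    [KrasnerHyperring R₁] [KrasnerHyperring R₂] {N₁ : Hyperideal R₁} (h : N₁.IsProper) (N₂ : Hyperideal R₂) :
    (prodIdeal N₁ N₂).IsProper := by
  intro huniv
  obtain ⟨x, hx⟩ := (Set.ne_univ_iff_exists_notMem _).mp h
  have hmem : (x, (zero : R₂)) ∈ (prodIdeal N₁ N₂ : Set (R₁ × R₂)) := huniv ▸ Set.mem_univ _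
  exact hx hmem.1

theorem prod_weaklyPrime_phiPrime_general {X Y : Type u}
    [KrasnerHyperring X] [KrasnerHyperring Y]
    (N : Hyperideal X) (hN : IsWeaklyPrime N)
    (φ : Hyperideal (X × Y) → Set (X × Y))
    (hlow : ∀ J : Hyperideal (X × Y), phiW J ⊆ φ J) :
    IsPhiPrime φ (prodIdeal N (topIdeal Y)) := by
  refine ⟨hN.1.prodIdeal_left _, fun a b hab hnotφ => ?_⟩
  have hfst : mul a.1 b.1 ≠ zero := by
    intro h0
    apply hnotφ
    apply hlow
    rw [prod_mul_def, h0]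
    exact zero_prod_mem_phiW_prod_top N _
  rcases hN.2 a.1 b.1 hab.1 hfst with ha | hb
  · exact Or.inl ⟨ha, trivial⟩
  · exact Or.inr ⟨hb, trivial⟩

/-- STATEMENT 7: if `N` is a weakly prime hyperideal of `X`, then `N × Y` is a
`φ`-prime hyperideal of `X × Y` for every `φ` with `φ_w ≤ φ ≤ φ₁`. -/
theorem prod_weaklyPrime_phiPrime {X Y : Type u}
    [KrasnerHyperring X] [KrasnerHyperring Y]
    (N : Hyperideal X) (hN : IsWeaklyPrime N)
    (φ : Hyperideal (X × Y) → Set (X × Y)) (hφ : MapsToIdealOrEmpty φ)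
    (hlow : ∀ J : Hyperideal (X × Y), phiW J ⊆ φ J)
    (hhigh : ∀ J : Hyperideal (X × Y), φ J ⊆ (J : Set (X × Y))) :
    IsPhiPrime φ (prodIdeal N (topIdeal Y)) :=
  prod_weaklyPrime_phiPrime_general N hN φ hlow

end KrasnerHyperring
end

section
/- Let R be a commutative Krasner hyperring with nonzero identity, N a proper hyperideal of R, and φ : L(R) → L(R) ∪ {∅} a function with φ(N) ⊆ N. Then the following are equivalent: (i) N is a φ-primary hyperideal of R; (ii) for every a ∈ R − √N, (N : a) = N ∪ (φ(N) : a); (iii) for every a ∈ R − √N, (N : a) = N or (N : a) = (φ(N) : a); (iv) for all hyperideals K, L of R with K∘L ⊆ N and K∘L ⊄ φ(N), either K ⊆ N or L ⊆ √N. -/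
universe u

namespace KrasnerHyperring

variable {R : Type u} [KrasnerHyperring R]

/-!
The first three conditions are equivalent pointwise in `a`: for `a ∉ √N` the φ-primary
condition says exactly `(N : a) ⊆ N ∪ (φ(N) : a)`, and the reverse inclusion comes from
`φ(N) ⊆ N`. Since `(N : a)`, `N` and `(φ(N) : a)` are all closed under `−` and `⊕`, and a
hypergroup is never the union of two proper subhypergroups, the union in (ii) collapses to one
of its members.

For (iii) ⇒ (iv), if `K ⊄ N` then (iii) forces `b ∘ K ⊆ φ(N)` for every `b ∈ L − √N`. The
radical is closed under `⊕` (a binomial-expansion argument), so if moreover `L ⊄ √N`, every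
`b ∈ L ∩ √N` lies in `z ⊕ (−b₀)` with `z, b₀ ∈ L − √N`, whence `L ∘ K ⊆ φ(N)`. The converse
(iv) ⇒ (i) applies (iv) to principal hyperideals.
-/

instance : Std.Associative (mul : R → R → R) := ⟨mul_assoc⟩

instance : Std.Commutative (mul : R → R → R) := ⟨mul_comm⟩

lemma mul_mem_hadd (a : R) {b c z : R} (hz : z ∈ hadd b c) :
    mul a z ∈ hadd (mul a b) (mul a c) :=
  distrib a b c ▸ ⟨z, hz, rfl⟩

lemma neg_eq_mul_neg_one (a : R) : neg a = mul (neg one) a := by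
  rw [mul_comm, mul_neg, mul_one]

lemma hpow_mul (a b : R) (n : ℕ) : hpow (mul a b) n = mul (hpow a n) (hpow b n) := by
  induction n with
  | zero => exact (mul_one one).symm
  | succ n ih => simp only [hpow, ih]; ac_rfl

lemma mem_colon {A : Set R} {a r : R} : r ∈ colon A a ↔ mul a r ∈ A := Iff.rfl

/-- Unlike a hyperideal, such a set may be empty; this covers `φ N = ∅`. -/
structure IsHaddClosed (C : Set R) : Prop where
  neg_mem : ∀ a ∈ C, neg a ∈ C
  hadd_subset : ∀ a ∈ C, ∀ b ∈ C, hadd a b ⊆ C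

namespace Hyperideal

variable (I : Hyperideal R)

lemma mul_mem_right {a : R} (b : R) (ha : a ∈ I) : mul a b ∈ I :=
  mul_comm b a ▸ I.mul_mem' b a ha

lemma isHaddClosed : IsHaddClosed (I : Set R) := ⟨I.neg_mem', I.hadd_subset'⟩

lemma hpow_mem_of_le {a : R} {m n : ℕ} (ha : hpow a m ∈ I) (hmn : m ≤ n) : hpow a n ∈ I := by
  induction n, hmn using Nat.le_induction with
  | base => exact ha
  | succ n _ ih => exact I.mul_mem' a _ ih

lemma hpow_mem_of_mem_hadd {x y z : R} {m n : ℕ} (hx : hpow x m ∈ I) (hy : hpow y n ∈ I)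
    (hz : z ∈ hadd x y) : hpow z (m + n) ∈ I := by
  -- Expand `z^k` one factor at a time: `x^i y^j z^(k+1) ∈ x^(i+1) y^j z^k ⊕ x^i y^(j+1) z^k`.
  have hmonomial : ∀ k i j, m + n ≤ i + j + k →
      mul (mul (hpow x i) (hpow y j)) (hpow z k) ∈ I := by
    intro k
    induction k with
    | zero =>
      intro i j hij
      refine I.mul_mem_right _ ?_
      rcases le_or_gt m i with hi | hi
      · exact I.mul_mem_right _ (I.hpow_mem_of_le hx hi)
      · exact I.mul_mem' _ _ (I.hpow_mem_of_le hy (by omega))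
    | succ k ih =>
      intro i j hij
      set w := mul (mul (hpow x i) (hpow y j)) (hpow z k)
      have hwx : mul w x ∈ I := by
        convert ih (i + 1) j (by omega) using 1; simp only [w, hpow]; ac_rfl
      have hwy : mul w y ∈ I := by
        convert ih i (j + 1) (by omega) using 1; simp only [w, hpow]; ac_rfl
      have hwz : mul (mul (hpow x i) (hpow y j)) (hpow z (k + 1)) = mul w z := by
        simp only [w, hpow]; ac_rfl
      exact hwz ▸ I.hadd_subset' _ hwx _ hwy (mul_mem_hadd w hz)
  simpa only [hpow, mul_one, mul_comm one] using hmonomial (m + n) 0 0 (by omega)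

lemma isHaddClosed_radical : IsHaddClosed (radical (I : Set R)) where
  neg_mem := by
    rintro a ⟨n, hn, ha⟩
    exact ⟨n, hn, by rw [neg_eq_mul_neg_one, hpow_mul]; exact I.mul_mem' _ _ ha⟩
  hadd_subset := by
    rintro x ⟨m, hm, hx⟩ y ⟨n, -, hy⟩ z hz
    exact ⟨m + n, by omega, I.hpow_mem_of_mem_hadd hx hy hz⟩

def principal (a : R) : Hyperideal R where
  carrier := {x | ∃ r : R, x = mul r a}
  nonempty' := ⟨a, one, by rw [mul_comm, mul_one]⟩
  hadd_subset' := by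
    rintro _ ⟨r, rfl⟩ _ ⟨s, rfl⟩ z hz
    rw [mul_comm r, mul_comm s, ← distrib] at hz
    obtain ⟨t, -, rfl⟩ := hz
    exact ⟨t, mul_comm a t⟩
  neg_mem' := by
    rintro _ ⟨r, rfl⟩
    exact ⟨neg r, by rw [mul_comm (neg r), mul_neg, mul_comm a]⟩
  mul_mem' := by
    rintro s _ ⟨r, rfl⟩
    exact ⟨mul s r, (mul_assoc s r a).symm⟩

lemma mem_principal_self (a : R) : a ∈ principal a :=
  ⟨one, by rw [mul_comm, mul_one]⟩

end Hyperideal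

namespace IsHaddClosed

variable {A B C : Set R}

lemma of_mapsToIdealOrEmpty {φ : Hyperideal R → Set R} (hφ : MapsToIdealOrEmpty φ)
    (I : Hyperideal R) : IsHaddClosed (φ I) := by
  rcases hφ I with h | ⟨J, h⟩
  · exact h ▸ ⟨fun _ => False.elim, fun _ => False.elim⟩
  · exact h ▸ J.isHaddClosed

lemma colon (hC : IsHaddClosed C) (a : R) : IsHaddClosed (colon C a) where
  neg_mem r hr := by
    rw [mem_colon, mul_neg]
    exact hC.neg_mem _ hr
  hadd_subset r hr s hs _ hz := hC.hadd_subset _ hr _ hs (mul_mem_hadd a hz)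

lemma colonSet (hA : IsHaddClosed A) (B : Set R) : IsHaddClosed (colonSet A B) where
  neg_mem r hr b hb := by
    rw [mul_comm, mul_neg, mul_comm]
    exact hA.neg_mem _ (hr b hb)
  hadd_subset r hr s hs z hz b hb := by
    have hbz := mul_mem_hadd b hz
    rw [mul_comm b, mul_comm b, mul_comm b] at hbz
    exact hA.hadd_subset _ (hr b hb) _ (hs b hb) hbz

lemma mem_of_mem_hadd (hC : IsHaddClosed C) {p q z : R} (hz : z ∈ hadd p q) (hzC : z ∈ C)
    (hq : q ∈ C) : p ∈ C :=
  hC.hadd_subset _ (hC.neg_mem q hq) _ hzC (reversible q p z (hadd_comm p q ▸ hz))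

lemma subset_or_subset_of_union (hA : IsHaddClosed A) (hB : IsHaddClosed B)
    (hAB : IsHaddClosed (A ∪ B)) : A ⊆ B ∨ B ⊆ A := by
  by_contra! h
  obtain ⟨⟨x, hxA, hxB⟩, ⟨y, hyB, hyA⟩⟩ := And.imp Set.not_subset.mp Set.not_subset.mp h
  obtain ⟨z, hz⟩ := hadd_nonempty x y
  rcases hAB.hadd_subset x (.inl hxA) y (.inr hyB) hz with hzA | hzB
  · exact hyA (hA.mem_of_mem_hadd (hadd_comm x y ▸ hz) hzA hxA)
  · exact hxB (hB.mem_of_mem_hadd hz hzB hyB)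

lemma eq_or_eq_of_eq_union (hA : IsHaddClosed A) (hB : IsHaddClosed B) (hC : IsHaddClosed C)
    (h : C = A ∪ B) : C = A ∨ C = B := by
  rcases subset_or_subset_of_union hA hB (h ▸ hC) with hAB | hBA
  · exact .inr (h.trans (Set.union_eq_right.mpr hAB))
  · exact .inl (h.trans (Set.union_eq_left.mpr hBA))

lemma subset_of_diff_subset (hA : IsHaddClosed A) (hB : IsHaddClosed B) (hC : IsHaddClosed C)
    (hAB : ¬ A ⊆ B) (h : A \ B ⊆ C) : A ⊆ C := by
  obtain ⟨b₀, hb₀A, hb₀B⟩ := Set.not_subset.mp hAB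
  intro b hbA
  by_cases hbB : b ∈ B
  · obtain ⟨z, hz⟩ := hadd_nonempty b b₀
    have hzB : z ∉ B := fun hzB => hb₀B (hB.mem_of_mem_hadd (hadd_comm b b₀ ▸ hz) hzB hbB)
    have hzC : z ∈ C := h ⟨hA.hadd_subset b hbA b₀ hb₀A hz, hzB⟩
    exact hC.mem_of_mem_hadd hz hzC (h ⟨hb₀A, hb₀B⟩)
  · exact h ⟨hbA, hbB⟩

end IsHaddClosed

section PhiPrimary

variable {φ : Hyperideal R → Set R} {N : Hyperideal R}

lemma colon_eq_union_of_isPhiPrimary (hφN : φ N ⊆ (N : Set R)) (hP : IsPhiPrimary φ N) {a : R}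
    (ha : a ∉ radical (N : Set R)) : colon (N : Set R) a = (N : Set R) ∪ colon (φ N) a := by
  refine Set.Subset.antisymm (fun r hr => ?_) (Set.union_subset (fun r => N.mul_mem' a r) ?_)
  · by_cases hrφ : mul a r ∈ φ N
    · exact .inr hrφ
    · rw [mem_colon, mul_comm] at hr
      rw [mul_comm] at hrφ
      exact .inl ((hP.2 r a hr hrφ).resolve_right ha)
  · exact fun r hr => hφN hr

lemma isPhiPrimary_of_colon_eq_or_eq (hN : N.IsProper)
    (h : ∀ a : R, a ∉ radical (N : Set R) →
      colon (N : Set R) a = (N : Set R) ∨ colon (N : Set R) a = colon (φ N) a) :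
    IsPhiPrimary φ N := by
  refine ⟨hN, fun a b hab hφ => or_iff_not_imp_right.mpr fun hb => ?_⟩
  have ha : a ∈ colon (N : Set R) b := by rwa [mem_colon, mul_comm]
  rcases h b hb with he | he
  · rwa [he] at ha
  · rw [he, mem_colon, mul_comm] at ha
    exact absurd ha hφ

lemma subset_or_subset_radical_of_colon_eq_or_eq (hφ : IsHaddClosed (φ N))
    (h : ∀ a : R, a ∉ radical (N : Set R) →
      colon (N : Set R) a = (N : Set R) ∨ colon (N : Set R) a = colon (φ N) a)
    {K L : Hyperideal R} (hKL : mulSet (K : Set R) (L : Set R) ⊆ (N : Set R))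
    (hKLφ : ¬ mulSet (K : Set R) (L : Set R) ⊆ φ N) :
    (K : Set R) ⊆ (N : Set R) ∨ (L : Set R) ⊆ radical (N : Set R) := by
  refine or_iff_not_imp_left.mpr fun hK => by_contra fun hL => hKLφ ?_
  have hLK : (L : Set R) \ radical (N : Set R) ⊆ colonSet (φ N) K := by
    rintro b ⟨hbL, hb⟩
    have hKb : (K : Set R) ⊆ colon (N : Set R) b := fun k hk => by
      rw [mem_colon, mul_comm]
      exact hKL ⟨k, hk, b, hbL, rfl⟩
    rcases h b hb with he | he
    · exact absurd (he ▸ hKb) hK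
    · rw [he] at hKb
      exact hKb
  have hL' :=
    L.isHaddClosed.subset_of_diff_subset N.isHaddClosed_radical (hφ.colonSet K) hL hLK
  rintro _ ⟨k, hk, b, hb, rfl⟩
  exact mul_comm b k ▸ hL' hb k hk

lemma isPhiPrimary_of_forall_hyperideal (hN : N.IsProper)
    (h : ∀ K L : Hyperideal R, mulSet (K : Set R) (L : Set R) ⊆ (N : Set R) →
      ¬ mulSet (K : Set R) (L : Set R) ⊆ φ N →
      (K : Set R) ⊆ (N : Set R) ∨ (L : Set R) ⊆ radical (N : Set R)) :
    IsPhiPrimary φ N := by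
  refine ⟨hN, fun a b hab hφ => ?_⟩
  have hsub : mulSet (Hyperideal.principal a : Set R) (Hyperideal.principal b) ⊆ (N : Set R) := by
    rintro _ ⟨_, ⟨r, rfl⟩, _, ⟨s, rfl⟩, rfl⟩
    have : mul (mul r a) (mul s b) = mul (mul r s) (mul a b) := by ac_rfl
    exact this ▸ N.mul_mem' _ _ hab
  have hnsub : ¬ mulSet (Hyperideal.principal a : Set R) (Hyperideal.principal b) ⊆ φ N :=
    fun hφ' => hφ (hφ' ⟨a, Hyperideal.mem_principal_self a, b, Hyperideal.mem_principal_self b,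
      rfl⟩)
  exact (h _ _ hsub hnsub).imp (· (Hyperideal.mem_principal_self a))
    (· (Hyperideal.mem_principal_self b))

end PhiPrimary

/-- STATEMENT 12: characterizations of `φ`-primary hyperideals. -/
theorem phiPrimary_characterizations {R : Type u} [KrasnerHyperring R]
    (φ : Hyperideal R → Set R) (hφ : MapsToIdealOrEmpty φ)
    (N : Hyperideal R) (hN : N.IsProper) (hφN : φ N ⊆ (N : Set R)) :
    (IsPhiPrimary φ N ↔
      ∀ a : R, a ∉ radical (N : Set R) →
        colon (N : Set R) a = (N : Set R) ∪ colon (φ N) a) ∧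
    (IsPhiPrimary φ N ↔
      ∀ a : R, a ∉ radical (N : Set R) →
        colon (N : Set R) a = (N : Set R) ∨ colon (N : Set R) a = colon (φ N) a) ∧
    (IsPhiPrimary φ N ↔
      ∀ K L : Hyperideal R, mulSet (K : Set R) (L : Set R) ⊆ (N : Set R) →
        ¬ mulSet (K : Set R) (L : Set R) ⊆ φ N →
        (K : Set R) ⊆ (N : Set R) ∨ (L : Set R) ⊆ radical (N : Set R)) := by
  have hφClosed : IsHaddClosed (φ N) := .of_mapsToIdealOrEmpty hφ N
  have h12 := fun hP a => colon_eq_union_of_isPhiPrimary hφN hP (a := a)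
  have h23 : (∀ a : R, a ∉ radical (N : Set R) →
      colon (N : Set R) a = (N : Set R) ∪ colon (φ N) a) →
      ∀ a : R, a ∉ radical (N : Set R) →
        colon (N : Set R) a = (N : Set R) ∨ colon (N : Set R) a = colon (φ N) a :=
    fun h a ha => N.isHaddClosed.eq_or_eq_of_eq_union (hφClosed.colon a) (N.isHaddClosed.colon a)
      (h a ha)
  have h31 := isPhiPrimary_of_colon_eq_or_eq (φ := φ) hN
  exact ⟨⟨h12, h31 ∘ h23⟩, ⟨h23 ∘ h12, h31⟩,
    ⟨fun hP _ _ => subset_or_subset_radical_of_colon_eq_or_eq hφClosed (h23 (h12 hP)),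
      isPhiPrimary_of_forall_hyperideal hN⟩⟩

end KrasnerHyperring
end

section
/- Let R be a commutative Krasner hyperring with nonzero identity, φ a reduction function and δ an expansion function on L(R), and let T be a φ-δ-primary hyperideal of R such that (φ(T) : a) = φ((T : a)) for each a ∈ R. Then for every a ∈ R with (T : a) ≠ R, the hyperideal (T : a) is a φ-δ-primary hyperideal of R. -/
universe u

namespace KrasnerHyperring

variable {R : Type u} [KrasnerHyperring R]

lemma mul_neg_eq_neg_mul (a r : R) : mul a (neg r) = neg (mul a r) := by
  apply neg_unique
  have h0 : zero ∈ hadd r (neg r) := zero_mem_hadd_neg r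
  have : mul a zero ∈ (fun x => mul a x) '' hadd r (neg r) := ⟨zero, h0, rfl⟩
  rw [distrib, mul_zero] at this
  exact this

/-- `(T : a)` as a hyperideal. -/
def colonIdeal (T : Hyperideal R) (a : R) : Hyperideal R where
  carrier := colon (T : Set R) a
  nonempty' := ⟨zero, show mul a zero ∈ (T : Set R) by rw [mul_zero]; exact zero_mem T⟩
  hadd_subset' := by
    intro r hr r' hr' x hx
    have : mul a x ∈ (fun y => mul a y) '' hadd r r' := ⟨x, hx, rfl⟩
    rw [distrib] at this
    exact T.hadd_subset' (mul a r) hr (mul a r') hr' this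
  neg_mem' := by
    intro r hr
    show mul a (neg r) ∈ (T : Set R)
    rw [mul_neg_eq_neg_mul]
    exact T.neg_mem' (mul a r) hr
  mul_mem' := by
    intro s r hr
    show mul a (mul s r) ∈ (T : Set R)
    have : mul a (mul s r) = mul s (mul a r) := by
      rw [← mul_assoc, mul_comm a s, mul_assoc]
    rw [this]
    exact T.mul_mem' s (mul a r) hr

lemma mem_colonIdeal {T : Hyperideal R} {a r : R} : r ∈ colonIdeal T a ↔ mul a r ∈ T :=
  Iff.rfl

lemma coe_subset_colonIdeal (T : Hyperideal R) (a : R) : (T : Set R) ⊆ colonIdeal T a :=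
  fun r hr => T.mul_mem' a r hr

lemma IsPhiDeltaPrimary.colonIdeal {φ : Hyperideal R → Set R} {δ : Hyperideal R → Hyperideal R}
    (hδ : ∀ I J : Hyperideal R, (I : Set R) ⊆ J → (δ I : Set R) ⊆ δ J)
    {T : Hyperideal R} (hT : IsPhiDeltaPrimary φ δ T) {a : R}
    (hφ : colon (φ T) a ⊆ φ (colonIdeal T a)) (hproper : (colonIdeal T a).IsProper) :
    IsPhiDeltaPrimary φ δ (colonIdeal T a) := by
  refine ⟨hproper, fun x y hxy hφxy => ?_⟩
  have hmem : mul (mul a x) y ∈ T := by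
    rw [mul_assoc]
    exact mem_colonIdeal.mp hxy
  have hnφ : mul (mul a x) y ∉ φ T := by
    rw [mul_assoc]
    exact fun h => hφxy (hφ h)
  rcases hT.2 (mul a x) y hmem hnφ with hax | hy
  · exact Or.inl (mem_colonIdeal.mpr hax)
  · exact Or.inr (hδ T _ (coe_subset_colonIdeal T a) hy)

theorem colon_phiDeltaPrimary_general {R : Type u} [KrasnerHyperring R]
    (φ : Hyperideal R → Set R) (δ : Hyperideal R → Hyperideal R)
    (hδ : IsExpansion δ)
    (T : Hyperideal R) (hT : IsPhiDeltaPrimary φ δ T)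
    (hcol : ∀ a : R, colon (φ T) a = φ (colonIdeal T a)) :
    ∀ a : R, (colonIdeal T a).IsProper → IsPhiDeltaPrimary φ δ (colonIdeal T a) :=
  fun a hproper => hT.colonIdeal hδ.2 (hcol a).le hproper

/-- STATEMENT 15: if `T` is `φ`-`δ`-primary and `(φ(T) : a) = φ((T : a))` for all `a`,
then every proper `(T : a)` is a `φ`-`δ`-primary hyperideal. -/
theorem colon_phiDeltaPrimary {R : Type u} [KrasnerHyperring R]
    (φ : Hyperideal R → Set R) (δ : Hyperideal R → Hyperideal R)
    (hφ : IsReduction φ) (hδ : IsExpansion δ)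
    (T : Hyperideal R) (hT : IsPhiDeltaPrimary φ δ T)
    (hcol : ∀ a : R, colon (φ T) a = φ (colonIdeal T a)) :
    ∀ a : R, (colonIdeal T a).IsProper → IsPhiDeltaPrimary φ δ (colonIdeal T a) :=
  colon_phiDeltaPrimary_general φ δ hδ T hT hcol

end KrasnerHyperring
end

section
/- Let R be a commutative Krasner hyperring with nonzero identity, φ a reduction function on L(R), and δ an expansion function on L(R) with δ ≤ δ₁, where δ₁(N) = √N. If T is a φ-δ-primary hyperideal of R with φ(T) ≠ ∅ and δ₁(φ(T)) ⊆ δ(T) (i.e. √(φ(T)) ⊆ δ(T)), then δ(T) = δ₁(T) = √T. -/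
universe u

namespace KrasnerHyperring

variable {R : Type u} [KrasnerHyperring R]

theorem hpow_one (a : R) : hpow a 1 = a := mul_one a

theorem hpow_succ (a : R) (n : ℕ) : hpow a (n + 1) = mul (hpow a n) a := mul_comm _ _

theorem IsPhiDeltaPrimary.radical_subset {φ : Hyperideal R → Set R}
    {δ : Hyperideal R → Hyperideal R} {N : Hyperideal R} (hN : IsPhiDeltaPrimary φ δ N)
    (hext : (N : Set R) ⊆ δ N) (hrad : radical (φ N) ⊆ (δ N : Set R)) :
    radical (N : Set R) ⊆ δ N := by
  rintro a ⟨n, hn, ha⟩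
  induction n, hn using Nat.le_induction with
  | base => exact hext (by rwa [hpow_one] at ha)
  | succ n _ ih =>
    by_cases hφ : hpow a (n + 1) ∈ φ N
    · exact hrad ⟨n + 1, n.succ_pos, hφ⟩
    · rw [hpow_succ] at ha hφ
      exact (hN.2 _ _ ha hφ).elim ih id

theorem delta_eq_radical_of_phiDeltaPrimary_general {R : Type u} [KrasnerHyperring R]
    (φ : Hyperideal R → Set R) (δ : Hyperideal R → Hyperideal R)
    (hδ : IsExpansion δ)
    (hδle : ∀ I : Hyperideal R, (δ I : Set R) ⊆ radical (I : Set R))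
    (T : Hyperideal R) (hT : IsPhiDeltaPrimary φ δ T)
    (hrad : radical (φ T) ⊆ (δ T : Set R)) :
    (δ T : Set R) = radical (T : Set R) :=
  (hδle T).antisymm (hT.radical_subset (hδ.1 T) hrad)

/-- if `δ ≤ δ₁`, `T` is `φ`-`δ`-primary, `φ(T) ≠ ∅` and
`√(φ(T)) ⊆ δ(T)`, then `δ(T) = δ₁(T) = √T`. -/
theorem delta_eq_radical_of_phiDeltaPrimary {R : Type u} [KrasnerHyperring R]
    (φ : Hyperideal R → Set R) (δ : Hyperideal R → Hyperideal R)
    (hφ : IsReduction φ) (hδ : IsExpansion δ)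
    (hδle : ∀ I : Hyperideal R, (δ I : Set R) ⊆ radical (I : Set R))
    (T : Hyperideal R) (hT : IsPhiDeltaPrimary φ δ T)
    (hne : φ T ≠ ∅) (hrad : radical (φ T) ⊆ (δ T : Set R)) :
    (δ T : Set R) = radical (T : Set R) :=
  delta_eq_radical_of_phiDeltaPrimary_general φ δ hδ hδle T hT hrad

end KrasnerHyperring
end

section
/- Let μ : R → S be a good homomorphism of commutative Krasner hyperrings with nonzero identity, and let φ be a global reduction function and δ a global expansion function. (i) If M is a φ-δ-primary hyperideal of S, then either μ⁻¹(M) = R or μ⁻¹(M) is a φ-δ-primary hyperideal of R. (ii) If moreover μ is surjective and N is a hyperideal of R containing ker(μ), then N is a φ-δ-primary hyperideal of R if and only if μ(N) is a φ-δ-primary hyperideal of S. -/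
/-!
Globality of `φ` and `δ` says that the `φ`-`δ`-primary condition for `μ⁻¹(M)` at `a, b` is
exactly the condition for `M` at `μ a, μ b`; this gives (i), and its converse when `μ` is
surjective. For (ii), `ker μ ⊆ N` forces `μ⁻¹(μ(N)) = N`, so both directions reduce to these.
-/

universe u

namespace KrasnerHyperring

variable {R : Type u} [KrasnerHyperring R]

/-- A good homomorphism of Krasner hyperrings. -/
structure GoodHom (R S : Type u) [KrasnerHyperring R] [KrasnerHyperring S] where
  toFun : R → S
  map_hadd : ∀ a b : R, toFun '' hadd a b = hadd (toFun a) (toFun b)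
  map_mul : ∀ a b : R, toFun (mul a b) = mul (toFun a) (toFun b)
  map_zero : toFun zero = zero

lemma GoodHom.map_neg {R S : Type u} [KrasnerHyperring R] [KrasnerHyperring S]
    (μ : GoodHom R S) (a : R) : μ.toFun (neg a) = neg (μ.toFun a) := by
  apply neg_unique
  have h0 : μ.toFun zero ∈ μ.toFun '' hadd a (neg a) := ⟨zero, zero_mem_hadd_neg a, rfl⟩
  rw [μ.map_hadd, μ.map_zero] at h0
  exact h0

/-- The preimage of a hyperideal under a good homomorphism is a hyperideal. -/
def preimIdeal {R S : Type u} [KrasnerHyperring R] [KrasnerHyperring S]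
    (μ : GoodHom R S) (M : Hyperideal S) : Hyperideal R where
  carrier := μ.toFun ⁻¹' (M : Set S)
  nonempty' := ⟨zero, by
    show μ.toFun zero ∈ (M : Set S)
    rw [μ.map_zero]; exact zero_mem M⟩
  hadd_subset' := by
    intro a ha b hb x hx
    have : μ.toFun x ∈ μ.toFun '' hadd a b := ⟨x, hx, rfl⟩
    rw [μ.map_hadd] at this
    exact M.hadd_subset' (μ.toFun a) ha (μ.toFun b) hb this
  neg_mem' := by
    intro a ha
    show μ.toFun (neg a) ∈ (M : Set S)
    rw [μ.map_neg]
    exact M.neg_mem' (μ.toFun a) ha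
  mul_mem' := by
    intro r a ha
    show μ.toFun (mul r a) ∈ (M : Set S)
    rw [μ.map_mul]
    exact M.mul_mem' (μ.toFun r) (μ.toFun a) ha

/-- The image of a hyperideal under a surjective good homomorphism is a hyperideal. -/
def imageIdeal {R S : Type u} [KrasnerHyperring R] [KrasnerHyperring S]
    (μ : GoodHom R S) (hs : Function.Surjective μ.toFun) (N : Hyperideal R) :
    Hyperideal S where
  carrier := μ.toFun '' (N : Set R)
  nonempty' := N.nonempty'.image μ.toFun
  hadd_subset' := by
    rintro a ⟨x, hx, rfl⟩ b ⟨y, hy, rfl⟩ z hz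
    rw [← μ.map_hadd] at hz
    obtain ⟨w, hw, rfl⟩ := hz
    exact ⟨w, N.hadd_subset' x hx y hy hw, rfl⟩
  neg_mem' := by
    rintro a ⟨x, hx, rfl⟩
    exact ⟨neg x, N.neg_mem' x hx, μ.map_neg x⟩
  mul_mem' := by
    rintro r a ⟨x, hx, rfl⟩
    obtain ⟨s, rfl⟩ := hs r
    exact ⟨mul s x, N.mul_mem' s x hx, μ.map_mul s x⟩

lemma neg_neg (a : R) : neg (neg a) = a :=
  (neg_unique (neg a) a (by rw [hadd_comm]; exact zero_mem_hadd_neg a)).symm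

section GoodHom

variable {R S : Type u} [KrasnerHyperring R] [KrasnerHyperring S] (μ : GoodHom R S)

@[simp]
lemma mem_preimIdeal {M : Hyperideal S} {a : R} : a ∈ preimIdeal μ M ↔ μ.toFun a ∈ M :=
  Iff.rfl

lemma isProper_preimIdeal_iff (hs : Function.Surjective μ.toFun) {M : Hyperideal S} :
    (preimIdeal μ M).IsProper ↔ M.IsProper := by
  simp only [Hyperideal.IsProper, Ne, Set.eq_univ_iff_forall]
  exact not_congr hs.forall.symm

/-- If `μ a = μ n` with `n ∈ N`, then `a ∈ n ⊕ x` for some `x ∈ ker μ`, so `a ∈ N`. -/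
lemma preimIdeal_imageIdeal (hs : Function.Surjective μ.toFun) (N : Hyperideal R)
    (hker : {a : R | μ.toFun a = zero} ⊆ (N : Set R)) :
    preimIdeal μ (imageIdeal μ hs N) = N := by
  refine SetLike.coe_injective (Set.Subset.antisymm ?_ fun _ => Set.mem_image_of_mem μ.toFun)
  rintro a ⟨n, hn, hna⟩
  obtain ⟨x, hx, hx0⟩ : zero ∈ μ.toFun '' hadd a (neg n) := by
    rw [μ.map_hadd, μ.map_neg, hna]
    exact zero_mem_hadd_neg _
  have ha : a ∈ hadd n x := by
    simpa only [neg_neg] using reversible (neg n) a x (by rwa [hadd_comm])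
  exact N.hadd_subset' n hn x (hker hx0) ha

variable {φR : Hyperideal R → Set R} {φS : Hyperideal S → Set S}
  {δR : Hyperideal R → Hyperideal R} {δS : Hyperideal S → Hyperideal S} {M : Hyperideal S}

lemma IsPhiDeltaPrimary.comap (hM : IsPhiDeltaPrimary φS δS M)
    (hproper : (preimIdeal μ M).IsProper)
    (hφ : φR (preimIdeal μ M) = μ.toFun ⁻¹' φS M)
    (hδ : (δR (preimIdeal μ M) : Set R) = μ.toFun ⁻¹' (δS M : Set S)) :
    IsPhiDeltaPrimary φR δR (preimIdeal μ M) := by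
  refine ⟨hproper, fun a b hab hφab => ?_⟩
  rw [mem_preimIdeal, μ.map_mul] at hab
  rw [hφ, Set.mem_preimage, μ.map_mul] at hφab
  rcases hM.2 _ _ hab hφab with ha | hb
  · exact Or.inl ha
  · exact Or.inr (show b ∈ (δR (preimIdeal μ M) : Set R) from hδ ▸ hb)

lemma IsPhiDeltaPrimary.of_comap (hs : Function.Surjective μ.toFun)
    (hφ : φR (preimIdeal μ M) = μ.toFun ⁻¹' φS M)
    (hδ : (δR (preimIdeal μ M) : Set R) = μ.toFun ⁻¹' (δS M : Set S))
    (hM : IsPhiDeltaPrimary φR δR (preimIdeal μ M)) : IsPhiDeltaPrimary φS δS M := by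
  refine ⟨(isProper_preimIdeal_iff μ hs).mp hM.1, fun a b hab hφab => ?_⟩
  obtain ⟨x, rfl⟩ := hs a
  obtain ⟨y, rfl⟩ := hs b
  rw [← μ.map_mul] at hab hφab
  rcases hM.2 x y hab (by rwa [hφ]) with hx | hy
  · exact Or.inl hx
  · exact Or.inr (show y ∈ μ.toFun ⁻¹' (δS M : Set S) from hδ ▸ hy)

end GoodHom

theorem goodHom_phiDeltaPrimary_general {R S : Type u}
    [KrasnerHyperring R] [KrasnerHyperring S] (μ : GoodHom R S)
    (φR : Hyperideal R → Set R) (φS : Hyperideal S → Set S)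
    (δR : Hyperideal R → Hyperideal R) (δS : Hyperideal S → Hyperideal S)
    -- `φ` and `δ` are global (with respect to `μ`):
    (hφglob : ∀ M : Hyperideal S, φR (preimIdeal μ M) = μ.toFun ⁻¹' (φS M))
    (hδglob : ∀ M : Hyperideal S,
      (δR (preimIdeal μ M) : Set R) = μ.toFun ⁻¹' (δS M : Set S)) :
    -- (i)
    (∀ M : Hyperideal S, IsPhiDeltaPrimary φS δS M →
      (μ.toFun ⁻¹' (M : Set S) = Set.univ ∨
        IsPhiDeltaPrimary φR δR (preimIdeal μ M))) ∧
    -- (ii)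
    (∀ hs : Function.Surjective μ.toFun, ∀ N : Hyperideal R,
      {a : R | μ.toFun a = zero} ⊆ (N : Set R) →
      (IsPhiDeltaPrimary φR δR N ↔ IsPhiDeltaPrimary φS δS (imageIdeal μ hs N))) := by
  refine ⟨fun M hM => ?_, fun hs N hker => ?_⟩
  · by_cases h : μ.toFun ⁻¹' (M : Set S) = Set.univ
    · exact Or.inl h
    · exact Or.inr (hM.comap μ h (hφglob M) (hδglob M))
  · have hN := preimIdeal_imageIdeal μ hs N hker
    constructor
    · intro hNprim
      refine IsPhiDeltaPrimary.of_comap μ hs (hφglob _) (hδglob _) ?_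
      rwa [hN]
    · intro hM
      rw [← hN]
      exact hM.comap μ ((isProper_preimIdeal_iff μ hs).mpr hM.1) (hφglob _) (hδglob _)

/-- STATEMENT 18: behaviour of `φ`-`δ`-primary hyperideals under good homomorphisms,
for global reduction and expansion functions. -/
theorem goodHom_phiDeltaPrimary {R S : Type u}
    [KrasnerHyperring R] [KrasnerHyperring S] (μ : GoodHom R S)
    (φR : Hyperideal R → Set R) (φS : Hyperideal S → Set S)
    (δR : Hyperideal R → Hyperideal R) (δS : Hyperideal S → Hyperideal S)
    (hφR : IsReduction φR) (hφS : IsReduction φS)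
    (hδR : IsExpansion δR) (hδS : IsExpansion δS)
    -- `φ` and `δ` are global (with respect to `μ`):
    (hφglob : ∀ M : Hyperideal S, φR (preimIdeal μ M) = μ.toFun ⁻¹' (φS M))
    (hδglob : ∀ M : Hyperideal S,
      (δR (preimIdeal μ M) : Set R) = μ.toFun ⁻¹' (δS M : Set S)) :
    -- (i)
    (∀ M : Hyperideal S, IsPhiDeltaPrimary φS δS M →
      (μ.toFun ⁻¹' (M : Set S) = Set.univ ∨
        IsPhiDeltaPrimary φR δR (preimIdeal μ M))) ∧
    -- (ii)
    (∀ hs : Function.Surjective μ.toFun, ∀ N : Hyperideal R,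
      {a : R | μ.toFun a = zero} ⊆ (N : Set R) →
      (IsPhiDeltaPrimary φR δR N ↔ IsPhiDeltaPrimary φS δS (imageIdeal μ hs N))) :=
  goodHom_phiDeltaPrimary_general μ φR φS δR δS hφglob hδglob

end KrasnerHyperring
end
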